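/- Let 0 ≤ δ < 1/4 and let (H₁, H₂, H₃) be a δ-representation of the sphere by n×n complex matrices. Then |bott(H₁,H₂,H₃) − (3/(2i))·Tr(H₁(H₂H₃ − H₃H₂))| ≤ 32 n δ², where the quantity (3/(2i))·Tr(H₁(H₂H₃ − H₃H₂)) is a real number. Consequently, if in addition nδ² < 1/64, then bott(H₁,H₂,H₃) is the unique integer at distance less than 1/2 from (3/(2i))·Tr(H₁(H₂H₃ − H₃H₂)). -/

import Mathlib

open Matrix

noncomputable section

namespace AC

variable {m : Type*} [Fintype m] [DecidableEq m]

/-- The ℓ² operator norm of a complex matrix. -/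
def opNorm (A : Matrix m m ℂ) : ℝ :=
  ‖Matrix.toEuclideanCLM (𝕜 := ℂ) A‖

/-- `(H₁, H₂, H₃)` is a δ-representation of the sphere: each `Hᵣ` is Hermitian, all
commutators have ℓ²-operator norm at most `δ`, and `‖H₁² + H₂² + H₃² − I‖ ≤ δ`. -/
def IsSphereRep (δ : ℝ) (H₁ H₂ H₃ : Matrix m m ℂ) : Prop :=
  H₁.IsHermitian ∧ H₂.IsHermitian ∧ H₃.IsHermitian ∧
  opNorm (H₁ * H₂ - H₂ * H₁) ≤ δ ∧
  opNorm (H₁ * H₃ - H₃ * H₁) ≤ δ ∧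
  opNorm (H₂ * H₃ - H₃ * H₂) ≤ δ ∧
  opNorm (H₁ ^ 2 + H₂ ^ 2 + H₃ ^ 2 - 1) ≤ δ

/-- The 2n×2n Hermitian block matrix `S(H₁,H₂,H₃) = [[H₃, H₁ − iH₂], [H₁ + iH₂, −H₃]]`. -/
def sphS (H₁ H₂ H₃ : Matrix m m ℂ) : Matrix (m ⊕ m) (m ⊕ m) ℂ :=
  Matrix.fromBlocks H₃ (H₁ - Complex.I • H₂) (H₁ + Complex.I • H₂) (-H₃)

open Classical in
/-- The Bott index: the number of positive eigenvalues (with multiplicity) of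
`S(H₁,H₂,H₃)` minus `n`.  (Junk value `0` if `S(H₁,H₂,H₃)` is not Hermitian.) -/
def bott (H₁ H₂ H₃ : Matrix m m ℂ) : ℤ :=
  if h : (sphS H₁ H₂ H₃).IsHermitian then
    ((Finset.univ.filter fun i => 0 < h.eigenvalues i).card : ℤ) - Fintype.card m
  else 0

end AC

/-!
The Hermitian matrix `S = S(H₁,H₂,H₃)` is an approximate symmetry: the blocks of `S² - 1` are
`H₁² + H₂² + H₃² - 1` and commutators, so `‖S² - 1‖ ≤ 4δ` and every eigenvalue `λ` of `S` satisfies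
`|λ² - 1| ≤ 4δ`. The Bott index is `∑ (step λ - 1/2)` over the `2n` eigenvalues, `step` being the
indicator of `0 < λ`. On the other side `Tr S = 0` and `Tr S³ = 6i Tr(H₁[H₂,H₃])`, so the Chern
quantity is `-Tr S³ / 4 = ∑ (p λ - 1/2)` for the cubic `p x = (2 + 3x - x³)/4`. As `p` agrees with
`step` to first order at `±1`, `|step λ - p λ| ≤ (λ² - 1)² ≤ 16δ²`; summing gives `32nδ²`.
-/

open WithLp
open scoped Matrix.Norms.L2Operator

namespace Matrix

section Blocks

variable {𝕜 : Type*} [RCLike 𝕜] {l m n o : Type*} [Fintype l] [Fintype m] [Fintype n] [Fintype o]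

lemma trace_fromBlocks {R : Type*} [AddCommMonoid R] (A : Matrix n n R) (B : Matrix n o R)
    (C : Matrix o n R) (D : Matrix o o R) : (fromBlocks A B C D).trace = A.trace + D.trace := by
  simp [trace, Fintype.sum_sum_type]

lemma _root_.EuclideanSpace.norm_sq_toLp_sum (v : n ⊕ o → 𝕜) :
    ‖toLp 2 v‖ ^ 2 = ‖toLp 2 (v ∘ Sum.inl)‖ ^ 2 + ‖toLp 2 (v ∘ Sum.inr)‖ ^ 2 := by
  simp only [EuclideanSpace.norm_sq_eq, Fintype.sum_sum_type, Function.comp_apply]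

variable [DecidableEq l] [DecidableEq m]

lemma l2_norm_mulVec_add_mulVec_le (P : Matrix n l 𝕜) (Q : Matrix n m 𝕜)
    (a : EuclideanSpace 𝕜 l) (b : EuclideanSpace 𝕜 m) :
    ‖toLp 2 (P *ᵥ ofLp a + Q *ᵥ ofLp b)‖ ≤ ‖P‖ * ‖a‖ + ‖Q‖ * ‖b‖ := by
  rw [toLp_add]
  exact (norm_add_le _ _).trans (add_le_add (P.l2_opNorm_mulVec a) (Q.l2_opNorm_mulVec b))

lemma l2_opNorm_fromBlocks_le {A : Matrix n l 𝕜} {B : Matrix n m 𝕜} {C : Matrix o l 𝕜}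
    {D : Matrix o m 𝕜} {c d : ℝ} (hA : ‖A‖ ≤ c) (hB : ‖B‖ ≤ d) (hC : ‖C‖ ≤ d) (hD : ‖D‖ ≤ c) :
    ‖fromBlocks A B C D‖ ≤ c + d := by
  have hc : 0 ≤ c := (norm_nonneg _).trans hA
  have hd : 0 ≤ d := (norm_nonneg _).trans hB
  rw [l2_opNorm_def]
  refine ContinuousLinearMap.opNorm_le_bound _ (by positivity) fun x => ?_
  rw [LinearEquiv.trans_apply, LinearMap.coe_toContinuousLinearMap', toLpLin_apply]
  set a : EuclideanSpace 𝕜 l := toLp 2 (ofLp x ∘ Sum.inl)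
  set b : EuclideanSpace 𝕜 m := toLp 2 (ofLp x ∘ Sum.inr)
  have hx : ‖x‖ ^ 2 = ‖a‖ ^ 2 + ‖b‖ ^ 2 := EuclideanSpace.norm_sq_toLp_sum (ofLp x)
  have hy : ‖toLp 2 (fromBlocks A B C D *ᵥ ofLp x)‖ ^ 2 =
      ‖toLp 2 (A *ᵥ ofLp a + B *ᵥ ofLp b)‖ ^ 2 + ‖toLp 2 (C *ᵥ ofLp a + D *ᵥ ofLp b)‖ ^ 2 := by
    rw [EuclideanSpace.norm_sq_toLp_sum, ← Sum.elim_comp_inl_inr (ofLp x), fromBlocks_mulVec]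
    rfl
  have h₁ := (l2_norm_mulVec_add_mulVec_le A B a b).trans (by gcongr : _ ≤ c * ‖a‖ + d * ‖b‖)
  have h₂ := (l2_norm_mulVec_add_mulVec_le C D a b).trans (by gcongr : _ ≤ d * ‖a‖ + c * ‖b‖)
  refine (sq_le_sq₀ (norm_nonneg _) (by positivity)).mp ?_
  rw [hy, mul_pow, hx]
  calc _ ≤ (c * ‖a‖ + d * ‖b‖) ^ 2 + (d * ‖a‖ + c * ‖b‖) ^ 2 := by gcongr
    _ ≤ (c + d) ^ 2 * (‖a‖ ^ 2 + ‖b‖ ^ 2) := by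
      nlinarith [mul_nonneg (mul_nonneg hc hd) (sq_nonneg (‖a‖ - ‖b‖))]

end Blocks

variable {m : Type*} [Fintype m] [DecidableEq m]

lemma IsHermitian.trace_pow_eq_sum_eigenvalues_pow {A : Matrix m m ℂ} (hA : A.IsHermitian)
    (p : ℕ) : (A ^ p).trace = ∑ i, (hA.eigenvalues i : ℂ) ^ p := by
  conv_lhs => rw [hA.spectral_theorem, ← map_pow, Unitary.conjStarAlgAut_apply, trace_mul_cycle,
    Unitary.coe_star_mul_self, one_mul, diagonal_pow, trace_diagonal]
  simp

lemma IsHermitian.abs_eigenvalues_sq_sub_one_le {A : Matrix m m ℂ} (hA : A.IsHermitian)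
    (i : m) : |hA.eigenvalues i ^ 2 - 1| ≤ ‖A ^ 2 - 1‖ := by
  have : Nonempty m := ⟨i⟩
  have hi : (hA.eigenvalues i : ℂ) ∈ spectrum ℂ A := by
    rw [hA.spectrum_eq_image_range]
    exact ⟨_, ⟨i, rfl⟩, rfl⟩
  have hmem := spectrum.subset_polynomial_aeval A (Polynomial.X ^ 2 - 1) ⟨_, hi, rfl⟩
  simp only [Polynomial.aeval_sub, map_pow, Polynomial.aeval_X, map_one, Polynomial.eval_sub,
    Polynomial.eval_pow, Polynomial.eval_X, Polynomial.eval_one] at hmem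
  exact_mod_cast spectrum.norm_le_norm_of_mem hmem

end Matrix

def cubicStep (x : ℝ) : ℝ := (2 + 3 * x - x ^ 3) / 4

lemma abs_ite_pos_sub_cubicStep_le (x : ℝ) :
    |(if 0 < x then 1 else 0) - cubicStep x| ≤ (x ^ 2 - 1) ^ 2 := by
  rw [cubicStep, abs_le]
  split_ifs with hx
  · constructor <;> nlinarith [sq_nonneg (x - 1), mul_nonneg hx.le (sq_nonneg (x - 1))]
  · have hx : 0 ≤ -x := neg_nonneg.mpr (not_lt.mp hx)
    constructor <;> nlinarith [sq_nonneg (x + 1), mul_nonneg hx (sq_nonneg (x + 1))]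

lemma round_eq_of_abs_sub_lt_half {x : ℝ} {k : ℤ} (h : |(k : ℝ) - x| < 1 / 2) : round x = k := by
  rw [round_eq_iff]
  constructor <;> linarith [abs_lt.mp h]

namespace AC

variable {m : Type*}

lemma sphS_isHermitian {H₁ H₂ H₃ : Matrix m m ℂ} (h₁ : H₁.IsHermitian) (h₂ : H₂.IsHermitian)
    (h₃ : H₃.IsHermitian) : (sphS H₁ H₂ H₃).IsHermitian := by
  refine IsHermitian.fromBlocks h₃ ?_ h₃.neg
  simp [conjTranspose_smul, h₁.eq, h₂.eq, sub_eq_add_neg]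

variable [Fintype m]

lemma trace_sphS (H₁ H₂ H₃ : Matrix m m ℂ) : (sphS H₁ H₂ H₃).trace = 0 := by
  simp [sphS, trace_fromBlocks]

variable [DecidableEq m]

lemma opNorm_eq_l2_opNorm (A : Matrix m m ℂ) : opNorm A = ‖A‖ := rfl

lemma sphS_sq_sub_one (H₁ H₂ H₃ : Matrix m m ℂ) :
    sphS H₁ H₂ H₃ ^ 2 - 1 =
      fromBlocks
        ((H₁ ^ 2 + H₂ ^ 2 + H₃ ^ 2 - 1) + Complex.I • (H₁ * H₂ - H₂ * H₁))
        (-(H₁ * H₃ - H₃ * H₁) + Complex.I • (H₂ * H₃ - H₃ * H₂))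
        ((H₁ * H₃ - H₃ * H₁) + Complex.I • (H₂ * H₃ - H₃ * H₂))
        ((H₁ ^ 2 + H₂ ^ 2 + H₃ ^ 2 - 1) - Complex.I • (H₁ * H₂ - H₂ * H₁)) := by
  rw [sphS, sq, fromBlocks_multiply, ← fromBlocks_one, sub_eq_add_neg, fromBlocks_neg,
    fromBlocks_add]
  congr 1 <;> simp only [sq, sub_mul, mul_sub, add_mul, mul_add, neg_mul, mul_neg,
    smul_mul_assoc, mul_smul_comm, smul_smul, Complex.I_mul_I, neg_smul, one_smul, smul_sub,
    smul_add] <;> module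

lemma trace_sphS_pow_three (H₁ H₂ H₃ : Matrix m m ℂ) :
    (sphS H₁ H₂ H₃ ^ 3).trace = 6 * Complex.I * (H₁ * (H₂ * H₃ - H₃ * H₂)).trace := by
  have hcube : sphS H₁ H₂ H₃ ^ 3 = sphS H₁ H₂ H₃ * (sphS H₁ H₂ H₃ ^ 2 - 1) + sphS H₁ H₂ H₃ := by
    rw [mul_sub, mul_one, sub_add_cancel, pow_succ']
  rw [hcube, trace_add, trace_sphS, add_zero, sphS_sq_sub_one, sphS, fromBlocks_multiply,
    trace_fromBlocks]
  simp only [mul_add, mul_sub, add_mul, sub_mul, neg_mul, mul_neg, smul_mul_assoc,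
    mul_smul_comm, trace_add, trace_sub, trace_neg, trace_smul, smul_eq_mul]
  -- rotate each cyclic word of length three to one fixed representative
  rw [trace_mul_cycle' H₃ H₁ H₂, trace_mul_cycle' H₂ H₃ H₁, trace_mul_cycle' H₂ H₁ H₃,
    trace_mul_cycle' H₃ H₂ H₁, trace_mul_cycle' H₁ H₃ H₁, trace_mul_cycle' H₂ H₃ H₂]
  ring

lemma norm_sphS_sq_sub_one_le {δ : ℝ} {H₁ H₂ H₃ : Matrix m m ℂ} (h : IsSphereRep δ H₁ H₂ H₃) :
    ‖sphS H₁ H₂ H₃ ^ 2 - 1‖ ≤ 4 * δ := by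
  obtain ⟨-, -, -, h₁₂, h₁₃, h₂₃, hq⟩ := h
  simp only [opNorm_eq_l2_opNorm] at h₁₂ h₁₃ h₂₃ hq
  have hI (K : Matrix m m ℂ) : ‖Complex.I • K‖ = ‖K‖ := by
    rw [norm_smul, Complex.norm_I, one_mul]
  rw [sphS_sq_sub_one, show 4 * δ = (δ + δ) + (δ + δ) by ring]
  apply l2_opNorm_fromBlocks_le
  · exact (norm_add_le _ _).trans (add_le_add hq ((hI _).trans_le h₁₂))
  · exact (norm_add_le _ _).trans (add_le_add ((norm_neg _).trans_le h₁₃) ((hI _).trans_le h₂₃))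
  · exact (norm_add_le _ _).trans (add_le_add h₁₃ ((hI _).trans_le h₂₃))
  · exact (norm_sub_le _ _).trans (add_le_add hq ((hI _).trans_le h₁₂))

lemma bott_eq_sum_eigenvalues {H₁ H₂ H₃ : Matrix m m ℂ} (hS : (sphS H₁ H₂ H₃).IsHermitian) :
    (bott H₁ H₂ H₃ : ℝ) = ∑ i, ((if 0 < hS.eigenvalues i then 1 else 0) - 1 / 2) := by
  rw [bott, dif_pos hS, Finset.sum_sub_distrib, Finset.sum_boole, Finset.sum_const,
    Finset.card_univ, Fintype.card_sum]
  push_cast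
  ring

lemma chern_eq_sum_cubicStep_eigenvalues {H₁ H₂ H₃ : Matrix m m ℂ}
    (hS : (sphS H₁ H₂ H₃).IsHermitian) :
    3 / (2 * Complex.I) * (H₁ * (H₂ * H₃ - H₃ * H₂)).trace =
      ((∑ i, (cubicStep (hS.eigenvalues i) - 1 / 2) : ℝ) : ℂ) := by
  have h₁ : ∑ i, (hS.eigenvalues i : ℂ) = 0 :=
    hS.trace_eq_sum_eigenvalues.symm.trans (trace_sphS H₁ H₂ H₃)
  have h₃ : ∑ i, (hS.eigenvalues i : ℂ) ^ 3 = 6 * Complex.I * (H₁ * (H₂ * H₃ - H₃ * H₂)).trace :=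
    (hS.trace_pow_eq_sum_eigenvalues_pow 3).symm.trans (trace_sphS_pow_three H₁ H₂ H₃)
  have hsum : ((∑ i, (cubicStep (hS.eigenvalues i) - 1 / 2) : ℝ) : ℂ) =
      3 / 4 * ∑ i, (hS.eigenvalues i : ℂ) - 1 / 4 * ∑ i, (hS.eigenvalues i : ℂ) ^ 3 := by
    push_cast [cubicStep]
    rw [Finset.mul_sum, Finset.mul_sum, ← Finset.sum_sub_distrib]
    exact Finset.sum_congr rfl fun i _ => by ring
  rw [hsum, h₁, h₃]
  field_simp
  linear_combination (12 : ℂ) * (H₁ * (H₂ * H₃ - H₃ * H₂)).trace * Complex.I_sq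

lemma abs_bott_sub_sum_cubicStep_le {δ : ℝ} {H₁ H₂ H₃ : Matrix m m ℂ}
    (h : IsSphereRep δ H₁ H₂ H₃) (hS : (sphS H₁ H₂ H₃).IsHermitian) :
    |(bott H₁ H₂ H₃ : ℝ) - ∑ i, (cubicStep (hS.eigenvalues i) - 1 / 2)| ≤
      32 * Fintype.card m * δ ^ 2 := by
  have hev (i : m ⊕ m) : |hS.eigenvalues i ^ 2 - 1| ≤ 4 * δ :=
    (hS.abs_eigenvalues_sq_sub_one_le i).trans (norm_sphS_sq_sub_one_le h)
  rw [bott_eq_sum_eigenvalues hS, ← Finset.sum_sub_distrib]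
  calc _ ≤ ∑ i, |(if 0 < hS.eigenvalues i then 1 else 0) - 1 / 2 -
          (cubicStep (hS.eigenvalues i) - 1 / 2)| := Finset.abs_sum_le_sum_abs _ _
    _ ≤ ∑ _i : m ⊕ m, (4 * δ) ^ 2 := Finset.sum_le_sum fun i _ => by
        rw [sub_sub_sub_cancel_right]
        exact (abs_ite_pos_sub_cubicStep_le _).trans (by rw [← sq_abs]; gcongr; exact hev i)
    _ = 32 * Fintype.card m * δ ^ 2 := by
      rw [Finset.sum_const, Finset.card_univ, Fintype.card_sum, nsmul_eq_mul]
      push_cast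
      ring

end AC

theorem bott_near_chern_general {n : ℕ} (δ : ℝ)
    (H₁ H₂ H₃ : Matrix (Fin n) (Fin n) ℂ)
    (hrep : AC.IsSphereRep δ H₁ H₂ H₃) :
    ((3 / (2 * Complex.I)) * (H₁ * (H₂ * H₃ - H₃ * H₂)).trace).im = 0 ∧
    |(AC.bott H₁ H₂ H₃ : ℝ) -
        ((3 / (2 * Complex.I)) * (H₁ * (H₂ * H₃ - H₃ * H₂)).trace).re| ≤
      32 * n * δ ^ 2 ∧
    ((n : ℝ) * δ ^ 2 < 1/64 →
      (|(AC.bott H₁ H₂ H₃ : ℝ) -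
          ((3 / (2 * Complex.I)) * (H₁ * (H₂ * H₃ - H₃ * H₂)).trace).re| < 1/2 ∧
       ∀ k : ℤ,
         |(k : ℝ) - ((3 / (2 * Complex.I)) * (H₁ * (H₂ * H₃ - H₃ * H₂)).trace).re| < 1/2 →
         k = AC.bott H₁ H₂ H₃)) := by
  have hS := AC.sphS_isHermitian hrep.1 hrep.2.1 hrep.2.2.1
  have hclose := AC.abs_bott_sub_sum_cubicStep_le hrep hS
  rw [Fintype.card_fin] at hclose
  rw [AC.chern_eq_sum_cubicStep_eigenvalues hS, Complex.ofReal_im, Complex.ofReal_re]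
  have hhalf (hsmall : (n : ℝ) * δ ^ 2 < 1 / 64) :
      |(AC.bott H₁ H₂ H₃ : ℝ) - ∑ i, (cubicStep (hS.eigenvalues i) - 1 / 2)| < 1 / 2 :=
    hclose.trans_lt (by linarith)
  exact ⟨rfl, hclose, fun hsmall => ⟨hhalf hsmall, fun k hk =>
    (round_eq_of_abs_sub_lt_half hk).symm.trans (round_eq_of_abs_sub_lt_half (hhalf hsmall))⟩⟩

/-- Lemma (`chernlemma`): if `(H₁,H₂,H₃)` is a δ-representation of the sphere with
`0 ≤ δ < 1/4`, then the quantity `(3/(2i))·Tr(H₁[H₂,H₃])` is real and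
`|bott(H₁,H₂,H₃) − (3/(2i))·Tr(H₁[H₂,H₃])| ≤ 32nδ²`.  Consequently, if moreover
`nδ² < 1/64`, then `bott(H₁,H₂,H₃)` is the unique integer at distance less than `1/2`
from `(3/(2i))·Tr(H₁[H₂,H₃])`. -/
theorem bott_near_chern {n : ℕ} (δ : ℝ) (hδ0 : 0 ≤ δ) (hδ : δ < 1/4)
    (H₁ H₂ H₃ : Matrix (Fin n) (Fin n) ℂ)
    (hrep : AC.IsSphereRep δ H₁ H₂ H₃) :
    ((3 / (2 * Complex.I)) * (H₁ * (H₂ * H₃ - H₃ * H₂)).trace).im = 0 ∧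
    |(AC.bott H₁ H₂ H₃ : ℝ) -
        ((3 / (2 * Complex.I)) * (H₁ * (H₂ * H₃ - H₃ * H₂)).trace).re| ≤
      32 * n * δ ^ 2 ∧
    ((n : ℝ) * δ ^ 2 < 1/64 →
      (|(AC.bott H₁ H₂ H₃ : ℝ) -
          ((3 / (2 * Complex.I)) * (H₁ * (H₂ * H₃ - H₃ * H₂)).trace).re| < 1/2 ∧
       ∀ k : ℤ,
         |(k : ℝ) - ((3 / (2 * Complex.I)) * (H₁ * (H₂ * H₃ - H₃ * H₂)).trace).re| < 1/2 →
         k = AC.bott H₁ H₂ H₃)) :=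
  bott_near_chern_general δ H₁ H₂ H₃ hrep
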